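/- In the setup described in the context (DAG G, identifying set S for the s-t-paths, arborescence T rooted at s, S' := E \ T, topological ordering ψ, and the maps v_s and v_t), the following holds for every arc e ∈ S' \ S: (1) ψ(v_s(e)) ≤ ψ(v_t(e)), and (2) there is no v_s(e)-v_t(e)-path using only arcs of T \ S. -/

import Mathlib

/-- The list of consecutive arcs of a list of vertices. -/
def arcsOf {V : Type*} (l : List V) : List (V × V) := l.zip l.tail

/-- `l` is (the vertex list of) a simple directed path from `u` to `v`
using only arcs from `A`. -/
def IsPathOn {V : Type*} (A : Set (V × V)) (u v : V) (l : List V) : Prop :=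
  l.Nodup ∧ l.head? = some u ∧ l.getLast? = some v ∧ ∀ p ∈ arcsOf l, p ∈ A

/-- The incidence vector of (the arc set of) a path given by vertex list `l`. -/
def pathVec {V : Type*} [DecidableEq V] (l : List V) : (V × V) → ℝ :=
  fun p => if p ∈ arcsOf l then 1 else 0

/-- `X^path`: the set of incidence vectors of simple `s`-`t`-paths in the digraph
with arc set `A`. -/
def XPath {V : Type*} [DecidableEq V] (A : Set (V × V)) (s t : V) :
    Set ((V × V) → ℝ) :=
  {x | ∃ l : List V, IsPathOn A s t l ∧ x = pathVec l}

/-- `X^flow`: the set of nonnegative `s`-`t`-flows of value 1 in the digraph with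
arc set `A` (flows vanish outside `A`, and every node has the appropriate excess). -/
def XFlow {V : Type*} [Fintype V] [DecidableEq V] (A : Set (V × V)) (s t : V) :
    Set ((V × V) → ℝ) :=
  {x | (∀ p, 0 ≤ x p) ∧ (∀ p, p ∉ A → x p = 0) ∧
    ∀ v, (∑ w, x (v, w)) - (∑ u, x (u, v)) =
      if v = s then 1 else if v = t then -1 else 0}

/-- `S` is identifying for `X`: any two distinct members of `X` differ on some arc in `S`. -/
def Identifying {V : Type*} (X : Set ((V × V) → ℝ)) (S : Set (V × V)) : Prop :=
  ∀ x ∈ X, ∀ y ∈ X, x ≠ y → ∃ e ∈ S, x e ≠ y e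

/-- The digraph with arc set `A` is acyclic: it has no directed cycle. -/
def IsAcyclicDigraph {V : Type*} (A : Set (V × V)) : Prop :=
  ¬ ∃ (a : V) (l : List V), (a :: l).Nodup ∧
      ∀ p ∈ arcsOf (a :: (l ++ [a])), p ∈ A

/-!
Write `e = (v, w)`. Part (1): `ψ` increases along arcs, and `vs e`, `v`, `w`, `vt e` appear in
this order on `T[s, v]`, then `e`, then an `(A \ S)`-path `Q` from `w` to `vt e`.

Part (2): suppose `R` is a `vs e`-`vt e`-path in `T \ S`. Since `vt e` is `t` or the tail of an
arc of `S`, and that arc lies on an `s`-`t`-path, some path `D` leads from `vt e` to `t`. Then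
`T[s, v] + e + Q + D` and `T[s, vs e] + R + D` are `s`-`t`-walks, and they are simple because
acyclicity makes `ψ` strictly increasing along arcs. They contain the same arcs of `S`:
`T[vs e, v]` contains none, since the head of such an arc would be a node of `V_s` after `vs e`,
and `e`, `Q`, `R` avoid `S`. Only the first walk contains `e`, contradicting that `S` is
identifying.
-/

section Arcs

variable {V : Type*}

@[simp] lemma arcsOf_singleton (a : V) : arcsOf [a] = [] := rfl

@[simp] lemma arcsOf_cons_cons (a b : V) (l : List V) :
    arcsOf (a :: b :: l) = (a, b) :: arcsOf (b :: l) := rfl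

lemma arcsOf_append_cons (l₁ : List V) (a : V) (l₂ : List V) :
    arcsOf (l₁ ++ a :: l₂) = arcsOf (l₁ ++ [a]) ++ arcsOf (a :: l₂) := by
  induction l₁ with
  | nil => simp
  | cons x l₁ ih => cases l₁ <;> simp_all

lemma arcsOf_append_of_getLast?_of_head? {l₁ l₂ : List V} {a b : V}
    (h₁ : l₁.getLast? = some a) (h₂ : l₂.head? = some b) :
    arcsOf (l₁ ++ l₂) = arcsOf l₁ ++ (a, b) :: arcsOf l₂ := by
  obtain ⟨l₁, rfl⟩ := List.getLast?_eq_some_iff.1 h₁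
  obtain ⟨l₂, rfl⟩ := List.head?_eq_some_iff.1 h₂
  rw [arcsOf_append_cons (l₁ ++ [a]) b l₂, List.append_assoc, List.singleton_append,
    arcsOf_append_cons l₁ a [b]]
  simp

lemma arcsOf_append_tail_of_getLast?_of_head? {l₁ l₂ : List V} {m : V}
    (h₁ : l₁.getLast? = some m) (h₂ : l₂.head? = some m) :
    arcsOf (l₁ ++ l₂.tail) = arcsOf l₁ ++ arcsOf l₂ := by
  obtain ⟨l₁, rfl⟩ := List.getLast?_eq_some_iff.1 h₁
  obtain ⟨l₂, rfl⟩ := List.head?_eq_some_iff.1 h₂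
  simpa using arcsOf_append_cons l₁ m l₂

lemma fst_mem_of_mem_arcsOf {p : V × V} {l : List V} (h : p ∈ arcsOf l) : p.1 ∈ l :=
  (List.of_mem_zip h).1

lemma snd_mem_tail_of_mem_arcsOf {p : V × V} {l : List V} (h : p ∈ arcsOf l) : p.2 ∈ l.tail :=
  (List.of_mem_zip h).2

lemma isChain_of_forall_mem_arcsOf {R : V → V → Prop} :
    ∀ {l : List V}, (∀ p ∈ arcsOf l, R p.1 p.2) → l.IsChain R
  | [], _ => List.isChain_nil
  | [x], _ => List.isChain_singleton x
  | x :: y :: l, h => by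
    simp only [arcsOf_cons_cons, List.mem_cons, forall_eq_or_imp] at h
    exact List.isChain_cons_cons.2 ⟨h.1, isChain_of_forall_mem_arcsOf h.2⟩

end Arcs

lemma List.idxOf_lt_idxOf_of_nodup {V : Type*} [DecidableEq V] {l₁ l₂ : List V} {a x : V}
    (hnd : (l₁ ++ a :: l₂).Nodup) (hx : x ∈ l₂) :
    (l₁ ++ a :: l₂).idxOf a < (l₁ ++ a :: l₂).idxOf x := by
  have hdisj := List.disjoint_of_nodup_append hnd
  have hxa : a ≠ x := fun h => (List.nodup_cons.1 hnd.of_append_right).1 (h ▸ hx)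
  rw [List.idxOf_append_of_notMem fun h => hdisj h List.mem_cons_self,
    List.idxOf_append_of_notMem fun h => hdisj h (List.mem_cons_of_mem _ hx),
    List.idxOf_cons_self, List.idxOf_cons_ne _ hxa]
  omega

lemma IsAcyclicDigraph.loop_notMem {V : Type*} {A : Set (V × V)} (h : IsAcyclicDigraph A)
    (a : V) : (a, a) ∉ A :=
  fun ha => h ⟨a, [], by simp, by simpa [arcsOf] using ha⟩

lemma IsAcyclicDigraph.rank_lt {V α : Type*} [PartialOrder α] {A : Set (V × V)} {r : V → α}
    (h : IsAcyclicDigraph A) (hr : Function.Injective r) (hle : ∀ p ∈ A, r p.1 ≤ r p.2) :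
    ∀ p ∈ A, r p.1 < r p.2 := by
  rintro ⟨a, b⟩ hab
  refine (hle _ hab).lt_of_ne fun hrab => h.loop_notMem a ?_
  obtain rfl : a = b := hr hrab
  exact hab

structure IsWalkOn {V : Type*} (A : Set (V × V)) (u v : V) (l : List V) : Prop where
  head : l.head? = some u
  last : l.getLast? = some v
  arcs_mem : ∀ p ∈ arcsOf l, p ∈ A

lemma IsPathOn.isWalkOn {V : Type*} {A : Set (V × V)} {u v : V} {l : List V}
    (h : IsPathOn A u v l) : IsWalkOn A u v l :=
  ⟨h.2.1, h.2.2.1, h.2.2.2⟩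

namespace IsWalkOn

variable {V : Type*} {A B : Set (V × V)} {u v w : V} {l l₁ l₂ : List V}

lemma singleton (u : V) : IsWalkOn A u u [u] := ⟨rfl, rfl, by simp⟩

lemma mono (h : IsWalkOn A u v l) (hAB : A ⊆ B) : IsWalkOn B u v l :=
  ⟨h.head, h.last, fun p hp => hAB (h.arcs_mem p hp)⟩

lemma last_mem (h : IsWalkOn A u v l) : v ∈ l := List.mem_of_getLast? h.last

lemma append (h₁ : IsWalkOn A u v l₁) (hvw : (v, w) ∈ A) (h₂ : IsWalkOn A w x l₂) :
    IsWalkOn A u x (l₁ ++ l₂) := by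
  refine ⟨by simp [List.head?_append, h₁.head], by simp [List.getLast?_append, h₂.last], ?_⟩
  rw [arcsOf_append_of_getLast?_of_head? h₁.last h₂.head]
  simp only [List.mem_append, List.mem_cons]
  rintro p (hp | hp | hp)
  exacts [h₁.arcs_mem p hp, hp ▸ hvw, h₂.arcs_mem p hp]

lemma append_tail (h₁ : IsWalkOn A u v l₁) (h₂ : IsWalkOn A v w l₂) :
    IsWalkOn A u w (l₁ ++ l₂.tail) := by
  refine ⟨by simp [List.head?_append, h₁.head], ?_, ?_⟩
  · obtain ⟨t, rfl⟩ := List.head?_eq_some_iff.1 h₂.head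
    have hlast₁ := h₁.last
    have hlast₂ := h₂.last
    cases ht : t.getLast? <;> simp_all [List.getLast?_append, List.getLast?_cons]
  · rw [arcsOf_append_tail_of_getLast?_of_head? h₁.last h₂.head]
    intro p hp
    exact (List.mem_append.1 hp).elim (h₁.arcs_mem p) (h₂.arcs_mem p)

lemma of_append_cons_left {x : V} (h : IsWalkOn A u v (l₁ ++ x :: l₂)) :
    IsWalkOn A u x (l₁ ++ [x]) := by
  refine ⟨by cases l₁ <;> simpa using h.head, by simp, fun p hp => h.arcs_mem p ?_⟩
  rw [arcsOf_append_cons]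
  exact List.mem_append_left _ hp

lemma of_append_cons_right {x : V} (h : IsWalkOn A u v (l₁ ++ x :: l₂)) :
    IsWalkOn A x v (x :: l₂) := by
  refine ⟨rfl, ?_, fun p hp => h.arcs_mem p ?_⟩
  · simpa [List.getLast?_append] using h.last
  · rw [arcsOf_append_cons]
    exact List.mem_append_right _ hp

section Rank

variable {α : Type*} [Preorder α] {r : V → α}

lemma pairwise_rank_lt (hr : ∀ p ∈ A, r p.1 < r p.2) (h : IsWalkOn A u v l) :
    l.Pairwise (r · < r ·) := by
  have hchain : l.IsChain (r · < r ·) :=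
    isChain_of_forall_mem_arcsOf fun p hp => hr p (h.arcs_mem p hp)
  rw [← List.isChain_map, List.isChain_iff_pairwise, List.pairwise_map] at hchain
  exact hchain

lemma isPathOn (hr : ∀ p ∈ A, r p.1 < r p.2) (h : IsWalkOn A u v l) : IsPathOn A u v l :=
  ⟨(h.pairwise_rank_lt hr).imp fun hlt heq => (heq ▸ hlt).false, h.head, h.last, h.arcs_mem⟩

lemma rank_head_le (hr : ∀ p ∈ A, r p.1 < r p.2) (h : IsWalkOn A u v l) {x : V} (hx : x ∈ l) :
    r u ≤ r x := by
  have hpw := h.pairwise_rank_lt hr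
  obtain ⟨t, rfl⟩ := List.head?_eq_some_iff.1 h.head
  rcases List.mem_cons.1 hx with rfl | hx
  exacts [le_rfl, (List.rel_of_pairwise_cons hpw hx).le]

lemma rank_le_last (hr : ∀ p ∈ A, r p.1 < r p.2) (h : IsWalkOn A u v l) {x : V} (hx : x ∈ l) :
    r x ≤ r v := by
  have hpw := h.pairwise_rank_lt hr
  obtain ⟨t, rfl⟩ := List.getLast?_eq_some_iff.1 h.last
  rcases List.mem_append.1 hx with hx | hx
  · exact ((List.pairwise_append.1 hpw).2.2 x hx v (List.mem_singleton_self v)).le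
  · rw [List.mem_singleton.1 hx]

end Rank

end IsWalkOn

section DetourArgument

variable {V : Type*} {A S T : Set (V × V)} {s t : V}

lemma exists_isWalkOn_target (hcov : ∀ e ∈ A, ∃ l, IsPathOn A s t l ∧ e ∈ arcsOf l)
    (hS : S ⊆ A) {y : V} (hy : y ∈ insert t {v | ∃ w, (v, w) ∈ S}) :
    ∃ D, IsWalkOn A y t D := by
  rcases hy with rfl | ⟨w, hw⟩
  · exact ⟨[y], .singleton y⟩
  · obtain ⟨L, hL, hmem⟩ := hcov _ (hS hw)
    obtain ⟨L₁, L₂, rfl⟩ := List.append_of_mem (fst_mem_of_mem_arcsOf hmem)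
    exact ⟨_, hL.isWalkOn.of_append_cons_right⟩

lemma not_exists_isWalkOn_sdiff_of_identifying [DecidableEq V] {α : Type*} [Preorder α]
    {r : V → α} (hr : ∀ p ∈ A, r p.1 < r p.2) (hid : Identifying (XPath A s t) S)
    (hT : T ⊆ A) {e : V × V} (he : e ∈ A) (heT : e ∉ T) (heS : e ∉ S) {x y : V}
    {P₁ P₂ Q D : List V}
    (hP : IsWalkOn T s e.1 (P₁ ++ x :: P₂)) (hP₂ : ∀ p ∈ arcsOf (x :: P₂), p ∉ S)
    (hQ : IsWalkOn (A \ S) e.2 y Q) (hD : IsWalkOn A y t D) :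
    ¬ ∃ R, IsWalkOn (T \ S) x y R := by
  rintro ⟨R, hR⟩
  have hP₁ := hP.of_append_cons_left
  have hQD := (hQ.mono Set.sdiff_subset).append_tail hD
  have hRD := (hR.mono (Set.sdiff_subset.trans hT)).append_tail hD
  have harcs₁ : arcsOf ((P₁ ++ x :: P₂) ++ (Q ++ D.tail))
      = arcsOf (P₁ ++ [x]) ++ arcsOf (x :: P₂) ++ e :: (arcsOf Q ++ arcsOf D) := by
    rw [arcsOf_append_of_getLast?_of_head? hP.last hQD.head, arcsOf_append_cons,
      arcsOf_append_tail_of_getLast?_of_head? hQ.last hD.head]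
  have harcs₂ : arcsOf ((P₁ ++ [x]) ++ (R ++ D.tail).tail)
      = arcsOf (P₁ ++ [x]) ++ (arcsOf R ++ arcsOf D) := by
    rw [arcsOf_append_tail_of_getLast?_of_head? hP₁.last hRD.head,
      arcsOf_append_tail_of_getLast?_of_head? hR.last hD.head]
  have he₁ : e ∈ arcsOf ((P₁ ++ x :: P₂) ++ (Q ++ D.tail)) := by rw [harcs₁]; simp
  have he₂ : e ∉ arcsOf ((P₁ ++ [x]) ++ (R ++ D.tail).tail) := by
    rw [harcs₂]
    simp only [List.mem_append, not_or]
    refine ⟨fun h => heT (hP₁.arcs_mem e h), fun h => heT (hR.arcs_mem e h).1, fun h => ?_⟩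
    -- `e` leaves a node of rank below `r y`, whereas `D` starts at `y`
    have hQA := hQ.mono Set.sdiff_subset
    exact ((hD.rank_head_le hr (fst_mem_of_mem_arcsOf h)).trans_lt
      ((hr e he).trans_le (hQA.rank_head_le hr hQA.last_mem))).false
  have hagree : ∀ p ∈ S, p ∈ arcsOf ((P₁ ++ x :: P₂) ++ (Q ++ D.tail)) ↔
      p ∈ arcsOf ((P₁ ++ [x]) ++ (R ++ D.tail).tail) := by
    intro p hp
    have hpP₂ : p ∉ arcsOf (x :: P₂) := fun h => hP₂ p h hp
    have hpQ : p ∉ arcsOf Q := fun h => (hQ.arcs_mem p h).2 hp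
    have hpR : p ∉ arcsOf R := fun h => (hR.arcs_mem p h).2 hp
    have hpe : p ≠ e := fun h => heS (h ▸ hp)
    rw [harcs₁, harcs₂]
    simp [hpP₂, hpQ, hpR, hpe]
  obtain ⟨p, hpS, hp⟩ := hid _ ⟨_, ((hP.mono hT).append he hQD).isPathOn hr, rfl⟩
    _ ⟨_, ((hP₁.mono hT).append_tail hRD).isPathOn hr, rfl⟩
    fun h => by
      simpa only [pathVec, he₁, he₂, if_true, if_false, one_ne_zero] using congrFun h e
  exact hp (by simp only [pathVec, hagree p hpS])

end DetourArgument

/-- Setup of Claim 3: `G` is a DAG with arc set `A` in which every arc lies on an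
`s`-`t`-path, `ψ` is a topological ordering, `S ⊆ A` is identifying for the
`s`-`t`-paths, `T ⊆ A` is a (spanning) arborescence rooted at `s` (unique `T`-path from
`s` to every node), `S' = A \ T`, `V_s = {s} ∪ {heads of arcs of S ∩ T}`,
`V_t = {t} ∪ {tails of arcs of S}`, and for `e = (v, w) ∈ S'` the node `vs e` is the last
element of `V_s` on the unique `s`-`v`-path in `T`, while `vt e` is the `ψ`-minimal node
of `V_t` reachable from `w` in `(V, A \ S)`.  Conclusion: for every `e ∈ S' \ S` one has
(1) `ψ (vs e) ≤ ψ (vt e)`, and (2) there is no `vs e`-`vt e`-path using only arcs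
of `T \ S`. -/
theorem stmt13 {V : Type*} [Fintype V] [DecidableEq V] (A : Set (V × V)) (s t : V)
    (hacyc : IsAcyclicDigraph A)
    (hcov : ∀ e ∈ A, ∃ l, IsPathOn A s t l ∧ e ∈ arcsOf l)
    (ψ : V ≃ Fin (Fintype.card V))
    (hψ : ∀ e ∈ A, (ψ e.1 : ℕ) ≤ (ψ e.2 : ℕ))
    (S : Set (V × V)) (hS : S ⊆ A) (hid : Identifying (XPath A s t) S)
    (T : Set (V × V)) (hT : T ⊆ A)
    (harb : ∀ v : V, ∃! l : List V, IsPathOn T s v l)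
    (vs vt : V × V → V)
    (hvs : ∀ e ∈ A \ T, ∀ l : List V, IsPathOn T s e.1 l →
      vs e ∈ insert s {v | ∃ u, (u, v) ∈ S ∩ T} ∧ vs e ∈ l ∧
        ∀ u ∈ l, u ∈ insert s {v | ∃ u', (u', v) ∈ S ∩ T} →
          l.idxOf u ≤ l.idxOf (vs e))
    (hvt : ∀ e ∈ A \ T,
      vt e ∈ insert t {v | ∃ w, (v, w) ∈ S} ∧
      (∃ l, IsPathOn (A \ S) e.2 (vt e) l) ∧
      ∀ u ∈ insert t {v | ∃ w, (v, w) ∈ S},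
        (∃ l, IsPathOn (A \ S) e.2 u l) → (ψ (vt e) : ℕ) ≤ (ψ u : ℕ)) :
    ∀ e ∈ (A \ T) \ S,
      (ψ (vs e) : ℕ) ≤ (ψ (vt e) : ℕ) ∧
      ¬ ∃ l, IsPathOn (T \ S) (vs e) (vt e) l := by
  let r : V → ℕ := fun v => ψ v
  have hr : ∀ p ∈ A, r p.1 < r p.2 := hacyc.rank_lt (Fin.val_injective.comp ψ.injective) hψ
  rintro e ⟨heAT, heS⟩
  obtain ⟨P, hP, -⟩ := harb e.1
  obtain ⟨-, hvsP, hvsLast⟩ := hvs e heAT P hP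
  obtain ⟨hvtVt, ⟨Q, hQ⟩, -⟩ := hvt e heAT
  have hQA := hQ.isWalkOn.mono Set.sdiff_subset
  refine ⟨?_, fun ⟨R, hR⟩ => ?_⟩
  · calc r (vs e) ≤ r e.1 := (hP.isWalkOn.mono hT).rank_le_last hr hvsP
      _ ≤ r e.2 := (hr e heAT.1).le
      _ ≤ r (vt e) := hQA.rank_head_le hr hQA.last_mem
  obtain ⟨P₁, P₂, rfl⟩ := List.append_of_mem hvsP
  have hP₂ : ∀ p ∈ arcsOf (vs e :: P₂), p ∉ S := fun p hp hpS =>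
    have hp₂ : p.2 ∈ P₂ := snd_mem_tail_of_mem_arcsOf hp
    (hvsLast p.2 (by simp [hp₂])
      (Or.inr ⟨p.1, hpS, hP.isWalkOn.of_append_cons_right.arcs_mem p hp⟩)).not_gt
      (List.idxOf_lt_idxOf_of_nodup hP.1 hp₂)
  obtain ⟨D, hD⟩ := exists_isWalkOn_target hcov hS hvtVt
  exact not_exists_isWalkOn_sdiff_of_identifying hr hid hT heAT.1 heAT.2 heS hP.isWalkOn hP₂
    hQ.isWalkOn hD ⟨R, hR.isWalkOn⟩
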